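/- For the symmetrized top to bottom-k shuffle q̃_{n,k} = (1/2)(q_{n,k} + q_{n,k}*) on S_n with 2 ≤ k ≤ n, the smallest eigenvalue of its Markov operator satisfies β_min ≥ −1 + (k−1)/(k(n−k+2)(n+1)). -/

import Mathlib

/-- `β` is an eigenvalue of the Markov operator `Qf(x) = Σ_y f(xy) q(y)` of `q`. -/
def IsEig {G : Type*} [Fintype G] [Group G] (q : G → ℝ) (β : ℝ) : Prop :=
  ∃ f : G → ℝ, f ≠ 0 ∧ ∀ x, ∑ y, f (x * y) * q y = β * f x

/-- The top to bottom-`k` measure on `S_n`: uniform on the cycles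
`σ_l = (1,2,…,l)` for `n − k + 1 ≤ l ≤ n` (here `0`-indexed via `Fin.cycleRange i`
with `n − k ≤ i`). -/
noncomputable def topToBottom (n k : ℕ) : Equiv.Perm (Fin n) → ℝ := fun σ =>
  if ∃ i : Fin n, n - k ≤ (i : ℕ) ∧ σ = Fin.cycleRange i then 1 / k else 0

open Finset Equiv

/-! If `f ≠ 0` and `Q f = β f`, the eigen-equation gives
`∑_y q̃(y) ∑_x (f x + f (x y))² = 2 (1 + β) ‖f‖²`, so it suffices to bound the left side from
below. The inner sum is invariant under `y ↦ y⁻¹`, so `q̃` may be replaced by `q`, which puts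
mass `1/k` on each cycle `σ_l`, `n - k + 1 ≤ l ≤ n`. For odd `l` we have `σ_l ^ l = 1`, and the
alternating telescoping `2 f x = ∑_{j < l} (-1)^j (f (x σ^j) + f (x σ^(j+1)))` with
Cauchy–Schwarz gives `∑_x (f x + f (x σ_l))² ≥ 4 ‖f‖² / l²`. Finally the sum of `1 / l²` over
odd `l ∈ [n - k + 1, n]` is at least `(1/(n - k + 2) - 1/(n + 1)) / 2`, by comparison with the
telescoping terms `1 / (l (l + 2))`. -/

section

variable {G : Type*} [Group G]

lemma two_mul_eq_sum_alternating (f : G → ℝ) {y : G} {c : ℕ} (hc : Odd c) (hy : y ^ c = 1)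
    (x : G) :
    2 * f x = ∑ j ∈ range c, (-1) ^ j * (f (x * y ^ j) + f (x * y ^ (j + 1))) := by
  have hterm : ∀ j ∈ range c, (-1) ^ j * (f (x * y ^ j) + f (x * y ^ (j + 1))) =
      (-1) ^ j * f (x * y ^ j) - (-1) ^ (j + 1) * f (x * y ^ (j + 1)) :=
    fun j _ => by ring
  rw [sum_congr rfl hterm, sum_range_sub', hy, hc.neg_one_pow]
  simp only [pow_zero, one_mul, mul_one]
  ring

variable [Fintype G]

lemma sum_symmetrize_mul (q : G → ℝ) {g : G → ℝ}
    (hg : ∀ y, g y⁻¹ = g y) : ∑ y, (q y + q y⁻¹) / 2 * g y = ∑ y, q y * g y := by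
  have hinv : ∑ y, q y⁻¹ * g y = ∑ y, q y * g y := by
    rw [← Equiv.sum_comp (Equiv.inv G)]
    simp [hg]
  simp only [add_div, add_mul, sum_add_distrib, div_mul_eq_mul_div, ← sum_div, hinv]
  ring

def plusEnergy (f : G → ℝ) (y : G) : ℝ := ∑ x, (f x + f (x * y)) ^ 2

variable (f : G → ℝ)

lemma plusEnergy_nonneg (y : G) : 0 ≤ plusEnergy f y :=
  sum_nonneg fun _ _ => sq_nonneg _

lemma plusEnergy_inv (y : G) : plusEnergy f y⁻¹ = plusEnergy f y := by
  rw [plusEnergy, ← Equiv.sum_comp (Equiv.mulRight y)]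
  refine sum_congr rfl fun x _ => ?_
  simp [add_comm]

lemma plusEnergy_eq (y : G) :
    plusEnergy f y = 2 * ∑ x, f x ^ 2 + 2 * ∑ x, f x * f (x * y) := by
  have hshift : ∑ x, f (x * y) ^ 2 = ∑ x, f x ^ 2 :=
    Equiv.sum_comp (Equiv.mulRight y) fun x => f x ^ 2
  simp only [plusEnergy, add_sq, sum_add_distrib, hshift, mul_assoc, ← mul_sum]
  ring

lemma sum_mul_plusEnergy_of_eigen (q : G → ℝ) (β : ℝ)
    (hf : ∀ x, ∑ y, f (x * y) * q y = β * f x) :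
    ∑ y, q y * plusEnergy f y = 2 * (∑ y, q y + β) * ∑ x, f x ^ 2 := by
  have hcross : ∑ y, q y * ∑ x, f x * f (x * y) = β * ∑ x, f x ^ 2 :=
    calc ∑ y, q y * ∑ x, f x * f (x * y) = ∑ x, f x * ∑ y, f (x * y) * q y := by
          simp only [mul_sum]
          rw [sum_comm]
          exact sum_congr rfl fun _ _ => sum_congr rfl fun _ _ => by ring
      _ = β * ∑ x, f x ^ 2 := by
          simp only [hf, mul_sum]
          exact sum_congr rfl fun _ _ => by ring
  simp only [plusEnergy_eq, mul_add, sum_add_distrib, ← sum_mul, mul_left_comm _ (2 : ℝ),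
    ← mul_sum, hcross]
  ring

lemma four_mul_sum_sq_le_plusEnergy {y : G} {c : ℕ} (hc : Odd c) (hy : y ^ c = 1) :
    4 * ∑ x, f x ^ 2 ≤ c ^ 2 * plusEnergy f y := by
  have hpoint (x : G) :
      4 * f x ^ 2 ≤ c * ∑ j ∈ range c, (f (x * y ^ j) + f (x * y ^ (j + 1))) ^ 2 := by
    have hcs := sq_sum_le_card_mul_sum_sq (s := range c)
      (f := fun j => (-1 : ℝ) ^ j * (f (x * y ^ j) + f (x * y ^ (j + 1))))
    rw [← two_mul_eq_sum_alternating f hc hy x, card_range] at hcs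
    simp only [mul_pow, ← pow_mul, pow_mul', neg_one_sq, one_pow, one_mul] at hcs
    linarith
  have hshift (j : ℕ) : ∑ x, (f (x * y ^ j) + f (x * y ^ (j + 1))) ^ 2 = plusEnergy f y := by
    simp only [pow_succ, ← mul_assoc]
    exact Equiv.sum_comp (Equiv.mulRight (y ^ j)) fun x => (f x + f (x * y)) ^ 2
  calc 4 * ∑ x, f x ^ 2
        ≤ ∑ x, c * ∑ j ∈ range c, (f (x * y ^ j) + f (x * y ^ (j + 1))) ^ 2 := by
        rw [mul_sum]
        exact sum_le_sum fun x _ => hpoint x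
    _ = c ^ 2 * plusEnergy f y := by
        rw [← mul_sum, sum_comm]
        simp only [hshift, sum_const, card_range, nsmul_eq_mul]
        ring

end

namespace Fin

lemma cycleRange_injective {n : ℕ} : Function.Injective (cycleRange : Fin n → Perm (Fin n)) := by
  intro i j h
  have : NeZero n := NeZero.of_pos i.pos
  rw [← cycleRange_symm_zero i, h, cycleRange_symm_zero]

lemma cycleRange_pow_val_add_one {n : ℕ} (i : Fin n) : cycleRange i ^ ((i : ℕ) + 1) = 1 := by
  have : NeZero n := NeZero.of_pos i.pos
  rcases eq_or_ne i 0 with rfl | h0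
  · simp
  · rw [← orderOf_dvd_iff_pow_eq_one, ← Perm.lcm_cycleType, cycleType_cycleRange h0]
    simp

lemma sum_filter_le_val_eq_sum_Ico {n m : ℕ} (g : ℕ → ℝ) :
    ∑ i : Fin n with m ≤ i.val, g i = ∑ i ∈ Ico m n, g i := by
  rw [sum_filter, Fin.sum_univ_eq_sum_range (fun i => if m ≤ i then g i else 0), ← sum_filter]
  congr 1
  ext i
  simp [and_comm]

end Fin

lemma sum_topToBottom_mul {n k : ℕ} (g : Perm (Fin n) → ℝ) :
    ∑ σ, topToBottom n k σ * g σ = (∑ i : Fin n with n - k ≤ i.val, g i.cycleRange) / k := by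
  have himage : ({σ | ∃ i : Fin n, n - k ≤ (i : ℕ) ∧ σ = i.cycleRange} : Finset _) =
      ({i : Fin n | n - k ≤ (i : ℕ)} : Finset _).image Fin.cycleRange := by
    ext σ
    simp [eq_comm]
  simp only [topToBottom, ite_mul, zero_mul, ← sum_filter, himage,
    sum_image Fin.cycleRange_injective.injOn, sum_div]
  exact sum_congr rfl fun _ _ => by ring

lemma sum_topToBottom {n k : ℕ} (hkn : k ≤ n) (hk : 1 ≤ k) : ∑ σ, topToBottom n k σ = 1 := by
  have h := sum_topToBottom_mul (n := n) (k := k) fun _ => 1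
  rw [Fin.sum_filter_le_val_eq_sum_Ico fun _ => 1, sum_const, Nat.card_Ico,
    Nat.sub_sub_self hkn] at h
  simpa [(by positivity : (k : ℝ) ≠ 0)] using h

lemma inv_sub_inv_div_two_le_sum_Ico_odd : ∀ L a : ℕ,
    (((a : ℝ) + 2)⁻¹ - ((a : ℝ) + L + 1)⁻¹) / 2 ≤
      ∑ i ∈ Ico a (a + L), if Odd (i + 1) then (((i : ℝ) + 1) ^ 2)⁻¹ else 0
  | 0, a => by
    have : ((a : ℝ) + 2)⁻¹ ≤ ((a : ℝ) + 1)⁻¹ := by gcongr; linarith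
    simp only [add_zero, Ico_self, sum_empty, CharP.cast_eq_zero]
    linarith
  | 1, a => by
    simp only [Nat.cast_one, add_assoc, one_add_one_eq_two, sub_self, zero_div]
    exact sum_nonneg fun i _ => by split_ifs <;> positivity
  | L + 2, a => by
    have head : (((a : ℝ) + 2)⁻¹ - ((a : ℝ) + 4)⁻¹) / 2 ≤
        ∑ i ∈ Ico a (a + 2), if Odd (i + 1) then (((i : ℝ) + 1) ^ 2)⁻¹ else 0 := by
      have hle : (((a : ℝ) + 2)⁻¹ - ((a : ℝ) + 4)⁻¹) / 2 ≤ (((a : ℝ) + 2) ^ 2)⁻¹ := by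
        rw [show (((a : ℝ) + 2)⁻¹ - ((a : ℝ) + 4)⁻¹) / 2 = (((a : ℝ) + 2) * ((a : ℝ) + 4))⁻¹ by
          field_simp; ring, sq]
        gcongr
        linarith
      rw [sum_Ico_eq_sum_range, add_tsub_cancel_left, sum_range_succ, sum_range_one]
      push_cast
      rcases Nat.even_or_odd a with ha | ha
      · have hnodd : ¬ Odd (a + 1 + 1) := Nat.not_odd_iff_even.mpr ha.add_one.add_one
        simp only [add_zero, ha.add_one, hnodd, if_true, if_false]
        refine hle.trans ?_
        gcongr
        linarith
      · have hnodd : ¬ Odd (a + 1) := Nat.not_odd_iff_even.mpr ha.add_one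
        simp only [add_zero, hnodd, ha.add_one.add_one, if_true, if_false, zero_add]
        convert hle using 3
        ring
    have tail := inv_sub_inv_div_two_le_sum_Ico_odd L (a + 2)
    rw [← sum_Ico_consecutive _ (by omega : a ≤ a + 2) (by omega : a + 2 ≤ a + (L + 2))]
    rw [show a + (L + 2) = a + 2 + L by omega]
    push_cast at tail ⊢
    have e1 : (a : ℝ) + 2 + 2 = a + 4 := by ring
    have e2 : (a : ℝ) + 2 + L + 1 = a + (L + 2) + 1 := by ring
    rw [e1, e2] at tail
    linarith

lemma div_le_sum_Ico_odd_inv_sq {n k : ℕ} (hkn : k ≤ n) :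
    ((k : ℝ) - 1) / (2 * ((n : ℝ) - k + 2) * ((n : ℝ) + 1)) ≤
      ∑ i ∈ Ico (n - k) n, if Odd (i + 1) then (((i : ℝ) + 1) ^ 2)⁻¹ else 0 := by
  have h := inv_sub_inv_div_two_le_sum_Ico_odd k (n - k)
  rw [Nat.sub_add_cancel hkn, Nat.cast_sub hkn, sub_add_cancel] at h
  have : (k : ℝ) ≤ n := by exact_mod_cast hkn
  have : (n : ℝ) - k + 2 ≠ 0 := by linarith
  convert h using 1
  field_simp
  ring

lemma sum_topToBottom_mul_plusEnergy_ge {n k : ℕ} (f : Perm (Fin n) → ℝ) :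
    4 / k * (∑ x, f x ^ 2) *
        ∑ i ∈ Ico (n - k) n, (if Odd (i + 1) then (((i : ℝ) + 1) ^ 2)⁻¹ else 0) ≤
      ∑ σ, topToBottom n k σ * plusEnergy f σ := by
  rw [sum_topToBottom_mul, ← Fin.sum_filter_le_val_eq_sum_Ico, mul_sum, sum_div]
  refine sum_le_sum fun i _ => ?_
  rw [div_mul_eq_mul_div, div_mul_eq_mul_div]
  refine div_le_div_of_nonneg_right ?_ k.cast_nonneg
  split_ifs with hodd
  · have h := four_mul_sum_sq_le_plusEnergy f hodd (Fin.cycleRange_pow_val_add_one i)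
    push_cast at h
    rw [← div_eq_mul_inv, div_le_iff₀ (by positivity)]
    linarith
  · simpa using plusEnergy_nonneg f i.cycleRange

/-- the smallest eigenvalue of the symmetrized top to bottom-`k`
shuffle `q̃_{n,k} = (1/2)(q_{n,k} + q_{n,k}*)` satisfies
`β_min ≥ −1 + (k−1)/(k(n−k+2)(n+1))`. -/
theorem stmt9 (n k : ℕ) (hk2 : 2 ≤ k) (hkn : k ≤ n)
    (qt : Equiv.Perm (Fin n) → ℝ)
    (hqt : ∀ σ, qt σ = (topToBottom n k σ + topToBottom n k σ⁻¹) / 2)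
    (β : ℝ) (hβ : IsEig qt β) :
    -1 + ((k : ℝ) - 1) / (k * ((n : ℝ) - k + 2) * ((n : ℝ) + 1)) ≤ β := by
  obtain ⟨f, hf0, hf⟩ := hβ
  have hN : 0 < ∑ x, f x ^ 2 := by
    obtain ⟨x, hx⟩ := Function.ne_iff.mp hf0
    exact (sq_pos_of_ne_zero hx).trans_le (single_le_sum (fun x _ => sq_nonneg (f x)) (mem_univ x))
  have hsymm {g : Perm (Fin n) → ℝ} (hg : ∀ σ, g σ⁻¹ = g σ) :
      ∑ σ, qt σ * g σ = ∑ σ, topToBottom n k σ * g σ := by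
    simp only [hqt, sum_symmetrize_mul _ hg]
  have hmass : ∑ σ, qt σ = 1 :=
    calc ∑ σ, qt σ = ∑ σ, topToBottom n k σ * 1 := by simpa using hsymm (g := 1) fun _ => rfl
      _ = 1 := by simpa using sum_topToBottom hkn (by omega)
  have henergy : ∑ σ, topToBottom n k σ * plusEnergy f σ = 2 * (1 + β) * ∑ x, f x ^ 2 := by
    rw [← hsymm (plusEnergy_inv f), sum_mul_plusEnergy_of_eigen f qt β hf, hmass]
  have hlower := (sum_topToBottom_mul_plusEnergy_ge (k := k) f).trans_eq henergy
  set S := ∑ i ∈ Ico (n - k) n, if Odd (i + 1) then (((i : ℝ) + 1) ^ 2)⁻¹ else 0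
  have hgap : 2 / k * S ≤ 1 + β := by
    refine le_of_mul_le_mul_left ?_ (by positivity : (0 : ℝ) < 2 * ∑ x, f x ^ 2)
    linarith [show 2 * (∑ x, f x ^ 2) * (2 / k * S) = 4 / k * (∑ x, f x ^ 2) * S by ring]
  have hk : (k : ℝ) ≠ 0 := by positivity
  calc -1 + ((k : ℝ) - 1) / (k * ((n : ℝ) - k + 2) * ((n : ℝ) + 1))
      = -1 + 2 / k * (((k : ℝ) - 1) / (2 * ((n : ℝ) - k + 2) * ((n : ℝ) + 1))) := by
        field_simp
    _ ≤ -1 + 2 / k * S := by gcongr; exact div_le_sum_Ico_odd_inv_sq hkn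
    _ ≤ β := by linarith
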